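/- The elementary map e(x,y) = (αx + p(y), βy + η) is an involution distinct from the identity if and only if one of the following holds: (1) α = −1, β = 1, η = 0; (2) α = 1, β = −1, and p(η − y) = −p(y) for all y (p is odd around η/2); (3) α = −1, β = −1, and p(η − y) = p(y) for all y (p is even around η/2). -/
import Mathlib


/-- Classification of nonidentity elementary involutions of the plane. -/
theorem elementary_involution_classification (α β η : ℂ) (p : Polynomial ℂ)
    (hαβ : α * β ≠ 0) (e : ℂ × ℂ → ℂ × ℂ)
    (he : ∀ v, e v = (α * v.1 + p.eval v.2, β * v.2 + η)) :
    ((∀ v, e (e v) = v) ∧ e ≠ id) ↔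
      ((α = -1 ∧ β = 1 ∧ η = 0) ∨
       (α = 1 ∧ β = -1 ∧ ∀ y : ℂ, p.eval (η - y) = -p.eval y) ∨
       (α = -1 ∧ β = -1 ∧ ∀ y : ℂ, p.eval (η - y) = p.eval y)) := by
  constructor
  · rintro ⟨hinv, hne⟩
    have key : ∀ x y : ℂ,
        α * (α * x + p.eval y) + p.eval (β * y + η) = x ∧ β * (β * y + η) + η = y := by
      intro x y
      have h := hinv (x, y)
      rw [he, he] at h
      simpa [Prod.ext_iff] using h
    have hβ2 : β ^ 2 = 1 := by
      have h0 := (key 0 0).2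
      have h1 := (key 0 1).2
      linear_combination h1 - h0
    have hα2 : α ^ 2 = 1 := by
      have h0 := (key 0 0).1
      have h1 := (key 1 0).1
      linear_combination h1 - h0
    have hp : ∀ y : ℂ, α * p.eval y + p.eval (β * y + η) = 0 := by
      intro y
      have h0 := (key 0 y).1
      linear_combination h0
    have hβcases : β = 1 ∨ β = -1 := by
      have h : (β - 1) * (β + 1) = 0 := by linear_combination hβ2
      rcases mul_eq_zero.mp h with h | h
      · exact Or.inl (sub_eq_zero.mp h)
      · exact Or.inr (eq_neg_of_add_eq_zero_left h)
    have hαcases : α = 1 ∨ α = -1 := by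
      have h : (α - 1) * (α + 1) = 0 := by linear_combination hα2
      rcases mul_eq_zero.mp h with h | h
      · exact Or.inl (sub_eq_zero.mp h)
      · exact Or.inr (eq_neg_of_add_eq_zero_left h)
    rcases hβcases with hβ | hβ
    · subst hβ
      have hη : η = 0 := by
        have h0 := (key 0 0).2
        linear_combination h0 / 2
      subst hη
      rcases hαcases with hα | hα
      · exfalso
        apply hne
        funext v
        have hz : p.eval v.2 = 0 := by
          have := hp v.2
          rw [hα] at this
          simp only [one_mul, add_zero] at this
          linear_combination this / 2
        rw [he, hα]
        simp [hz]
      · exact Or.inl ⟨hα, rfl, rfl⟩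
    · subst hβ
      rcases hαcases with hα | hα
      · refine Or.inr (Or.inl ⟨hα, rfl, fun y => ?_⟩)
        have h := hp y
        rw [hα] at h
        have harg : (-1 : ℂ) * y + η = η - y := by ring
        rw [harg] at h
        linear_combination h
      · refine Or.inr (Or.inr ⟨hα, rfl, fun y => ?_⟩)
        have h := hp y
        rw [hα] at h
        have harg : (-1 : ℂ) * y + η = η - y := by ring
        rw [harg] at h
        linear_combination h
  · rintro (⟨hα, hβ, hη⟩ | ⟨hα, hβ, hp⟩ | ⟨hα, hβ, hp⟩)
    · subst hα; subst hβ; subst hη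
      constructor
      · intro v
        rw [he, he]
        simp only [one_mul, add_zero]
        ext <;> simp <;> ring
      · intro h
        have h0 := congrFun h (0, 0)
        have h1 := congrFun h (1, 0)
        rw [he] at h0 h1
        simp [Prod.ext_iff] at h0 h1
        rw [h0] at h1
        norm_num at h1
    · subst hα; subst hβ
      constructor
      · intro v
        rw [he, he]
        have harg : (-1 : ℂ) * ((-1 : ℂ) * v.2 + η) + η = v.2 := by ring
        rw [harg]
        ext
        · simp only [one_mul]
          have := hp v.2
          have harg2 : (-1 : ℂ) * v.2 + η = η - v.2 := by ring
          rw [harg2, this]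
          ring
        · simp
      · intro h
        have h0 := congrFun h (0, 0)
        have h1 := congrFun h (0, 1)
        rw [he] at h0 h1
        simp [Prod.ext_iff] at h0 h1
        rw [h0.2] at h1
        norm_num at h1
    · subst hα; subst hβ
      constructor
      · intro v
        rw [he, he]
        have harg : (-1 : ℂ) * ((-1 : ℂ) * v.2 + η) + η = v.2 := by ring
        rw [harg]
        ext
        · have := hp v.2
          have harg2 : (-1 : ℂ) * v.2 + η = η - v.2 := by ring
          rw [harg2, this]
          ring
        · simp
      · intro h
        have h0 := congrFun h (0, 0)
        have h1 := congrFun h (1, 0)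
        rw [he] at h0 h1
        simp [Prod.ext_iff] at h0 h1
        rw [h0.1] at h1
        norm_num at h1
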